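/- For the staggered averaging scheme u^{n+1}_j = (u^n_{j−1} + 2u^n_j + u^n_{j+1})/4 with initial data u^0_j = 1 for 0 ≤ j < N and u^0_j = 0 otherwise, for each fixed j the value u^n_j converges to 0 as n → ∞. -/

import Mathlib

/-!
The stencil `(1, 2, 1) / 4` is the two-point average applied twice, so `n` steps of the scheme
are `2n` steps of a symmetric Bernoulli walk:
`u^n_j = 4⁻ⁿ ∑_k C(2n, k) u^0_{j+n-k}`.
Every weight is at most `C(2n, n) / 4ⁿ ≤ 1 / √(2n + 1)`, hence
`|u^n_j| ≤ N C(2n, n) / 4ⁿ → 0`.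
-/

open Finset Filter Topology

theorem sum_range_choose_succ_mul {R : Type*} [CommSemiring R] (g : ℕ → R) (m : ℕ) :
    ∑ i ∈ range (m + 2), ((m + 1).choose i : R) * g i =
      ∑ i ∈ range (m + 1), (m.choose i : R) * (g i + g (i + 1)) := by
  simpa [mul_add, sum_add_distrib] using sum_choose_succ_mul (fun i _ ↦ g i) m

def IsBinomialAveraging {K : Type*} [DivisionRing K] (u : ℕ → ℤ → K) : Prop :=
  ∀ n j, u (n + 1) j = (u n (j - 1) + 2 * u n j + u n (j + 1)) / 4

namespace IsBinomialAveraging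

theorem mul_four_pow_eq_sum_choose {K : Type*} [Field K] [CharZero K] {u : ℕ → ℤ → K}
    (hu : IsBinomialAveraging u) (n : ℕ) (j : ℤ) :
    u n j * 4 ^ n = ∑ i ∈ range (2 * n + 1), ((2 * n).choose i : K) * u 0 (j + n - i) := by
  induction n generalizing j with
  | zero => simp
  | succ n ih =>
    calc u (n + 1) j * 4 ^ (n + 1)
        = u n (j - 1) * 4 ^ n + 2 * (u n j * 4 ^ n) + u n (j + 1) * 4 ^ n := by
          rw [hu, pow_succ]; field_simp
      _ = ∑ i ∈ range (2 * n + 1), ((2 * n).choose i : K) *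
            ((u 0 (j + (n + 1 : ℕ) - i) + u 0 (j + (n + 1 : ℕ) - (i + 1 : ℕ))) +
              (u 0 (j + (n + 1 : ℕ) - (i + 1 : ℕ)) +
                u 0 (j + (n + 1 : ℕ) - (i + 1 + 1 : ℕ)))) := by
          rw [ih, ih, ih, mul_sum, ← sum_add_distrib, ← sum_add_distrib]
          refine sum_congr rfl fun i _ ↦ ?_
          push_cast
          ring_nf
      _ = _ := by
          rw [← sum_range_choose_succ_mul, ← sum_range_choose_succ_mul]
          ring_nf

end IsBinomialAveraging

theorem sum_abs_comp_le_sum_abs_of_injective {ι κ : Type*} [DecidableEq κ] (f : κ → ℝ)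
    (s : Finset κ) (hs : ∀ x ∉ s, f x = 0) (φ : ι → κ) (hφ : Function.Injective φ)
    (t : Finset ι) :
    ∑ i ∈ t, |f (φ i)| ≤ ∑ x ∈ s, |f x| :=
  calc ∑ i ∈ t, |f (φ i)| = ∑ x ∈ t.image φ, |f x| := by
        rw [sum_image fun _ _ _ _ h ↦ hφ h]
    _ ≤ ∑ x ∈ t.image φ ∪ s, |f x| :=
        sum_le_sum_of_subset_of_nonneg subset_union_left fun _ _ _ ↦ abs_nonneg _
    _ = ∑ x ∈ s, |f x| :=
        (sum_subset subset_union_right fun x _ hx ↦ by rw [hs x hx, abs_zero]).symm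

theorem IsBinomialAveraging.abs_le {u : ℕ → ℤ → ℝ} (hu : IsBinomialAveraging u)
    {s : Finset ℤ} (hs : ∀ i ∉ s, u 0 i = 0) (n : ℕ) (j : ℤ) :
    |u n j| ≤ (n.centralBinom : ℝ) / 4 ^ n * ∑ i ∈ s, |u 0 i| := by
  rw [div_mul_eq_mul_div, le_div_iff₀ (by positivity)]
  calc |u n j| * 4 ^ n = |u n j * 4 ^ n| := by
        rw [abs_mul, abs_of_pos (by positivity : (0 : ℝ) < 4 ^ n)]
    _ = |∑ i ∈ range (2 * n + 1), ((2 * n).choose i : ℝ) * u 0 (j + n - i)| := by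
        rw [hu.mul_four_pow_eq_sum_choose]
    _ ≤ ∑ i ∈ range (2 * n + 1), (n.centralBinom : ℝ) * |u 0 (j + n - i)| := by
        refine (abs_sum_le_sum_abs _ _).trans (sum_le_sum fun i _ ↦ ?_)
        rw [abs_mul, Nat.abs_cast]
        gcongr
        exact_mod_cast Nat.choose_le_centralBinom i n
    _ ≤ n.centralBinom * ∑ i ∈ s, |u 0 i| := by
        rw [← mul_sum]
        gcongr
        exact sum_abs_comp_le_sum_abs_of_injective (u 0) s hs (fun i : ℕ ↦ j + n - i)
          (fun a b h ↦ by simpa using h) _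

theorem centralBinom_sq_mul_le_sixteen_pow (n : ℕ) :
    n.centralBinom ^ 2 * (2 * n + 1) ≤ 16 ^ n := by
  induction n with
  | zero => simp
  | succ n ih =>
    -- `(n + 1) C(2n+2, n+1) = 2 (2n + 1) C(2n, n)` and `(2n + 1)(2n + 3) ≤ 4 (n + 1)²`
    refine Nat.le_of_mul_le_mul_left ?_ (by positivity : 0 < (n + 1) ^ 2)
    calc (n + 1) ^ 2 * ((n + 1).centralBinom ^ 2 * (2 * (n + 1) + 1))
        = (4 * (2 * n + 1) * (2 * n + 3)) * (n.centralBinom ^ 2 * (2 * n + 1)) := by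
          rw [← mul_assoc, ← mul_pow, Nat.succ_mul_centralBinom_succ]; ring
      _ ≤ (16 * (n + 1) ^ 2) * 16 ^ n := Nat.mul_le_mul (by nlinarith) ih
      _ = (n + 1) ^ 2 * 16 ^ (n + 1) := by ring

theorem tendsto_centralBinom_div_four_pow :
    Tendsto (fun n : ℕ ↦ (n.centralBinom : ℝ) / 4 ^ n) atTop (𝓝 0) := by
  have hsq : ∀ n : ℕ, ((n.centralBinom : ℝ) / 4 ^ n) ^ 2 ≤ 1 / (n + 1) := fun n ↦ by
    rw [div_pow, ← pow_mul, mul_comm, pow_mul, div_le_div_iff₀ (by positivity) (by positivity)]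
    have : (n.centralBinom : ℝ) ^ 2 * (2 * n + 1) ≤ 16 ^ n := by
      exact_mod_cast centralBinom_sq_mul_le_sixteen_pow n
    norm_num
    nlinarith [sq_nonneg (n.centralBinom : ℝ), (by positivity : (0 : ℝ) ≤ n)]
  have hsq_lim : Tendsto (fun n : ℕ ↦ ((n.centralBinom : ℝ) / 4 ^ n) ^ 2) atTop (𝓝 0) :=
    squeeze_zero (fun _ ↦ sq_nonneg _) hsq tendsto_one_div_add_atTop_nhds_zero_nat
  simpa [Real.sqrt_sq_eq_abs, abs_div] using hsq_lim.sqrt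

theorem stmt10 (N : ℕ) (u : ℕ → ℤ → ℝ)
    (h0 : ∀ j : ℤ, u 0 j = if 0 ≤ j ∧ j < (N : ℤ) then 1 else 0)
    (hrec : ∀ n j, u (n+1) j = (u n (j-1) + 2 * u n j + u n (j+1)) / 4) :
    ∀ j : ℤ, Filter.Tendsto (fun n => u n j) Filter.atTop (nhds 0) := by
  intro j
  have hsupp : ∀ i ∉ Ico (0 : ℤ) N, u 0 i = 0 := fun i hi ↦ by
    rw [h0, if_neg (by simpa using hi)]
  have hmass : ∑ i ∈ Ico (0 : ℤ) N, |u 0 i| = N := by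
    rw [sum_congr rfl fun i hi ↦ by rw [h0, if_pos (by simpa using hi), abs_one]]
    simp
  refine squeeze_zero_norm (fun n ↦ ?_)
    (by simpa using tendsto_centralBinom_div_four_pow.mul_const (N : ℝ))
  simpa [hmass] using IsBinomialAveraging.abs_le hrec hsupp n j
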